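/- Let p : Fin 4 → ℝ be a probability vector, x ∈ [0,1], n ≥ 1, and let Φₙ be the n-fold product channel of the Pauli channel 𝒩_p. Let M be the matrix indexed by Fin 2 × (Fin n → Fin 2) with entries M((i,s),(j,t)) = √(xᵢ·xⱼ)·Φₙ(E_{ij})(s,t), where x₀ = x, x₁ = 1−x, and E_{ij} is the matrix unit at (constant-i string, constant-j string). Define y₁(w) = x(p₀+p₃)^{n−w}(p₁+p₂)^w + (1−x)(p₀+p₃)^w(p₁+p₂)^{n−w}, Δ(w) = ((2x−1)(p₀+p₃)^{n−w}(p₁+p₂)^w)² + 4x(1−x)·((p₀−p₃)^{n−w}(p₁−p₂)^w)², and y_±(w) = ((p₀+p₃)^{n−w}(p₁+p₂)^w ± √Δ(w))/2. Then Φₙ(φₙˣ) and M are Hermitian and S(Φₙ(φₙˣ)) − S(M) = (1/Real.log 2)·Σ_{w=0}^{n} C(n,w)·(Real.negMulLog(y₁(w)) − Real.negMulLog(y₊(w)) − Real.negMulLog(y₋(w))). -/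

import Mathlib

open Matrix BigOperators

noncomputable section

/-- Matrix of the Kraus operator `K_u` acting on `n` systems. -/
def krausAt {ι : Type*} {d n : ℕ} (K : ι → Matrix (Fin d) (Fin d) ℂ) (u : Fin n → ι) :
    Matrix (Fin n → Fin d) (Fin n → Fin d) ℂ :=
  Matrix.of fun s t => ∏ i, K (u i) (s i) (t i)

/-- The n-fold product (i.i.d.) channel of the Kraus operators `K`. -/
def prodChannel {ι : Type*} [Fintype ι] {d : ℕ} (K : ι → Matrix (Fin d) (Fin d) ℂ) (n : ℕ)
    (ρ : Matrix (Fin n → Fin d) (Fin n → Fin d) ℂ) :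
    Matrix (Fin n → Fin d) (Fin n → Fin d) ℂ :=
  ∑ u : Fin n → ι, krausAt K u * ρ * (krausAt K u)ᴴ

/-- The Pauli matrices. -/
def pauli : Fin 4 → Matrix (Fin 2) (Fin 2) ℂ
  | 0 => 1
  | 1 => !![0, 1; 1, 0]
  | 2 => !![0, -Complex.I; Complex.I, 0]
  | 3 => !![1, 0; 0, -1]

/-- Kraus operators of the Pauli channel with probabilities `p`. -/
def pauliKraus (p : Fin 4 → ℝ) (i : Fin 4) : Matrix (Fin 2) (Fin 2) ℂ :=
  (Real.sqrt (p i) : ℂ) • pauli i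

/-- The weighted repetition code `φₙˣ`. -/
def repCode (n : ℕ) (x : ℝ) : Matrix (Fin n → Fin 2) (Fin n → Fin 2) ℂ :=
  Matrix.of fun s t =>
    if s = (fun _ => (0 : Fin 2)) ∧ t = (fun _ => (0 : Fin 2)) then (x : ℂ)
    else if s = (fun _ => (1 : Fin 2)) ∧ t = (fun _ => (1 : Fin 2)) then ((1 - x : ℝ) : ℂ)
    else 0

section Aux
open Polynomial
variable {m : Type*} [Fintype m] [DecidableEq m]


variable {m : Type*} [Fintype m] [DecidableEq m]

lemma charpoly_unit_conj (U A V : Matrix m m ℂ) (hUV : U * V = 1) :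
    (U * A * V).charpoly = A.charpoly := by
  have h1 : charmatrix (U * A * V) =
      ((C : ℂ →+* ℂ[X]).mapMatrix U) * charmatrix A * ((C : ℂ →+* ℂ[X]).mapMatrix V) := by
    unfold charmatrix
    rw [mul_sub, sub_mul, _root_.map_mul, _root_.map_mul]
    congr 1
    have h0 : (Matrix.scalar m (X : ℂ[X])) = (X : ℂ[X]) • (1 : Matrix m m ℂ[X]) := by
      simp [Matrix.scalar, smul_eq_diagonal_mul]
    rw [h0, mul_smul_comm, smul_mul_assoc, mul_one, ← _root_.map_mul, hUV, _root_.map_one]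
  rw [Matrix.charpoly, h1, det_mul, det_mul, mul_comm ((C : ℂ →+* ℂ[X]).mapMatrix U).det,
    mul_assoc, ← det_mul, ← _root_.map_mul (RingHom.mapMatrix (C : ℂ →+* ℂ[X])) U V, hUV,
    _root_.map_one]
  simp [Matrix.charpoly]

lemma charmatrix_diagonal (d : m → ℂ) :
    charmatrix (Matrix.diagonal d) = Matrix.diagonal (fun i => (X : ℂ[X]) - C (d i)) := by
  ext i j
  by_cases h : i = j
  · subst h; simp
  · simp [h, Matrix.diagonal_apply_ne _ h]

lemma charpoly_diagonal (d : m → ℂ) :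
    (Matrix.diagonal d).charpoly = ∏ i, ((X : ℂ[X]) - C (d i)) := by
  rw [Matrix.charpoly, _root_.charmatrix_diagonal, det_diagonal]

lemma roots_charpoly_diagonal (d : m → ℂ) :
    (Matrix.diagonal d).charpoly.roots = Finset.univ.val.map d := by
  rw [_root_.charpoly_diagonal]
  have : (∏ i, ((X : ℂ[X]) - C (d i))) = ((Finset.univ.val.map d).map (fun a => (X:ℂ[X]) - C a)).prod := by
    rw [Multiset.map_map]
    rfl
  rw [this, roots_multiset_prod_X_sub_C]

lemma charpoly_isHermitian {A : Matrix m m ℂ} (hA : A.IsHermitian) :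
    A.charpoly.roots = Finset.univ.val.map (fun i => (hA.eigenvalues i : ℂ)) := by
  conv_lhs => rw [hA.spectral_theorem, Unitary.conjStarAlgAut_apply]
  rw [charpoly_unit_conj _ _ _ (Matrix.mem_unitaryGroup_iff.mp hA.eigenvectorUnitary.2),
    roots_charpoly_diagonal]
  rfl

lemma sum_eig_eq {A : Matrix m m ℂ} (hA : A.IsHermitian) (μ : Multiset ℝ)
    (h : A.charpoly.roots = Multiset.map Complex.ofReal μ) :
    ∑ i, Real.negMulLog (hA.eigenvalues i) = (μ.map Real.negMulLog).sum := by
  have h2 : Finset.univ.val.map hA.eigenvalues = μ := by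
    apply Multiset.map_injective Complex.ofReal_injective
    rw [Multiset.map_map, ← h, charpoly_isHermitian hA]
    rfl
  rw [← h2, Multiset.map_map, Finset.sum_eq_multiset_sum]
  rfl

end Aux

/-- entry of the product channel applied to a standard basis matrix -/
lemma prodChannel_stdBasis {ι : Type*} [Fintype ι] {d n : ℕ}
    (K : ι → Matrix (Fin d) (Fin d) ℂ) (a b s t : Fin n → Fin d) :
    prodChannel K n (Matrix.single a b 1) s t
      = ∏ i, ∑ k : ι, K k (s i) (a i) * (starRingEnd ℂ) (K k (t i) (b i)) := by
  have h1 : ∀ u : Fin n → ι,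
      ((krausAt K u * Matrix.single a b 1 * (krausAt K u)ᴴ : Matrix _ _ ℂ)) s t
        = ∏ i, (K (u i) (s i) (a i) * (starRingEnd ℂ) (K (u i) (t i) (b i))) := by
    intro u
    have : ((krausAt K u * Matrix.single a b 1 * (krausAt K u)ᴴ : Matrix _ _ ℂ)) s t
        = krausAt K u s a * (starRingEnd ℂ) (krausAt K u t b) := by
      rw [Matrix.mul_apply]
      simp only [Matrix.mul_apply, Matrix.single, Matrix.conjTranspose_apply,
        Matrix.of_apply]
      simp [Finset.mul_sum, Finset.sum_mul, ite_and, RCLike.star_def]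
    rw [this]
    simp only [krausAt, Matrix.of_apply, ← Finset.prod_mul_distrib, map_prod]
  have h2 : prodChannel K n (Matrix.single a b 1) s t
      = ∑ u : Fin n → ι, ∏ i, (K (u i) (s i) (a i) * (starRingEnd ℂ) (K (u i) (t i) (b i))) := by
    rw [prodChannel]
    rw [Matrix.sum_apply]
    exact Finset.sum_congr rfl fun u _ => h1 u
  rw [h2, ← Fintype.piFinset_univ]
  exact (Finset.prod_univ_sum (fun _ => (Finset.univ : Finset ι))
    (fun i k => K k (s i) (a i) * (starRingEnd ℂ) (K k (t i) (b i)))).symm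

def Qm (p : Fin 4 → ℝ) (a b : Fin 2) : Matrix (Fin 2) (Fin 2) ℂ :=
  Matrix.of fun s t => ∑ k : Fin 4, pauliKraus p k s a * (starRingEnd ℂ) (pauliKraus p k t b)

lemma pauli_zero : pauli 0 = 1 := rfl
lemma pauli_one : pauli 1 = !![0, 1; 1, 0] := rfl
lemma pauli_two : pauli 2 = !![0, -Complex.I; Complex.I, 0] := rfl
lemma pauli_three : pauli 3 = !![1, 0; 0, -1] := rfl

variable {p : Fin 4 → ℝ}

lemma sqrt_sq' (hp : ∀ i, 0 ≤ p i) (k : Fin 4) :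
    ((Real.sqrt (p k) : ℝ) : ℂ) ^ 2 = ((p k : ℝ) : ℂ) := by
  rw [sq, ← Complex.ofReal_mul, Real.mul_self_sqrt (hp k)]

lemma Qm00 (hp : ∀ i, 0 ≤ p i) :
    Qm p 0 0 = !![((p 0 + p 3 : ℝ) : ℂ), 0; 0, ((p 1 + p 2 : ℝ) : ℂ)] := by
  ext s t
  fin_cases s <;> fin_cases t <;>
    simp only [Qm, Matrix.of_apply, Fin.sum_univ_four, pauliKraus, Matrix.smul_apply,
      smul_eq_mul, _root_.map_mul, Complex.conj_ofReal] <;>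
    simp [pauli, Matrix.one_apply] <;>
    ring_nf <;>
    simp [sqrt_sq' hp, Complex.I_sq] <;>
    try ring

lemma Qm11 (hp : ∀ i, 0 ≤ p i) :
    Qm p 1 1 = !![((p 1 + p 2 : ℝ) : ℂ), 0; 0, ((p 0 + p 3 : ℝ) : ℂ)] := by
  ext s t
  fin_cases s <;> fin_cases t <;>
    simp only [Qm, Matrix.of_apply, Fin.sum_univ_four, pauliKraus, Matrix.smul_apply,
      smul_eq_mul, _root_.map_mul, Complex.conj_ofReal] <;>
    simp [pauli, Matrix.one_apply] <;>
    ring_nf <;>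
    simp [sqrt_sq' hp, Complex.I_sq] <;>
    try ring

lemma Qm01 (hp : ∀ i, 0 ≤ p i) :
    Qm p 0 1 = !![0, ((p 0 - p 3 : ℝ) : ℂ); ((p 1 - p 2 : ℝ) : ℂ), 0] := by
  ext s t
  fin_cases s <;> fin_cases t <;>
    simp only [Qm, Matrix.of_apply, Fin.sum_univ_four, pauliKraus, Matrix.smul_apply,
      smul_eq_mul, _root_.map_mul, Complex.conj_ofReal] <;>
    simp [pauli, Matrix.one_apply] <;>
    ring_nf <;>
    simp [sqrt_sq' hp, Complex.I_sq] <;>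
    try ring

lemma Qm10 (hp : ∀ i, 0 ≤ p i) :
    Qm p 1 0 = !![0, ((p 1 - p 2 : ℝ) : ℂ); ((p 0 - p 3 : ℝ) : ℂ), 0] := by
  ext s t
  fin_cases s <;> fin_cases t <;>
    simp only [Qm, Matrix.of_apply, Fin.sum_univ_four, pauliKraus, Matrix.smul_apply,
      smul_eq_mul, _root_.map_mul, Complex.conj_ofReal] <;>
    simp [pauli, Matrix.one_apply] <;>
    ring_nf <;>
    simp [sqrt_sq' hp, Complex.I_sq] <;>
    try ring

def wt {n : ℕ} (s : Fin n → Fin 2) : ℕ := (Finset.univ.filter fun i => s i = 1).card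

lemma wt_le {n : ℕ} (s : Fin n → Fin 2) : wt s ≤ n :=
  le_trans (Finset.card_filter_le _ _) (by simp)

lemma fin2_eq (a : Fin 2) : a = 0 ∨ a = 1 := by fin_cases a <;> simp

lemma prod_fin2 {n : ℕ} (s : Fin n → Fin 2) (f : Fin 2 → ℂ) :
    ∏ i, f (s i) = f 0 ^ (n - wt s) * f 1 ^ (wt s) := by
  have h : ∀ i : Fin n, f (s i) = if s i = 1 then f 1 else f 0 := by
    intro i; rcases fin2_eq (s i) with h2 | h2 <;> simp [h2]
  rw [Finset.prod_congr rfl (fun i _ => h i), Finset.prod_ite]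
  rw [Finset.prod_const, Finset.prod_const]
  have hc : (Finset.univ.filter fun i => ¬ s i = 1).card = n - wt s := by
    have := Finset.card_filter_add_card_filter_not (s := (Finset.univ : Finset (Fin n)))
      (p := fun i => s i = 1)
    simp only [Finset.card_univ, Fintype.card_fin] at this
    unfold wt; omega
  rw [hc]
  rw [mul_comm]
  rfl

lemma prodChannel_qm (p : Fin 4 → ℝ) {n : ℕ} (a b : Fin 2) (s t : Fin n → Fin 2) :
    prodChannel (pauliKraus p) n (Matrix.single (fun _ => a) (fun _ => b) 1) s t
      = ∏ i, Qm p a b (s i) (t i) := by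
  rw [prodChannel_stdBasis]; rfl

lemma repCode_eq (n : ℕ) (hn : 1 ≤ n) (x : ℝ) :
    repCode n x = (x : ℂ) • Matrix.single (fun _ => (0:Fin 2)) (fun _ => (0:Fin 2)) 1
      + ((1 - x : ℝ) : ℂ) • Matrix.single (fun _ => (1:Fin 2)) (fun _ => (1:Fin 2)) 1 := by
  have h01 : (fun _ : Fin n => (0:Fin 2)) ≠ (fun _ => 1) := by
    intro h; have := congrFun h ⟨0, hn⟩; simp at this
  ext s t
  simp only [repCode, Matrix.of_apply, Matrix.add_apply, Matrix.smul_apply,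
    Matrix.single, smul_eq_mul]
  by_cases hs0 : s = (fun _ => (0:Fin 2)) <;> by_cases ht0 : t = (fun _ => (0:Fin 2)) <;>
    by_cases hs1 : s = (fun _ => (1:Fin 2)) <;> by_cases ht1 : t = (fun _ => (1:Fin 2)) <;>
    simp [hs0, ht0, hs1, ht1, eq_comm, h01] <;>
    first
      | (exfalso; apply h01; rw [← hs0, hs1])
      | (exfalso; apply h01; rw [← ht0, ht1])

lemma prodChannel_add {ι : Type*} [Fintype ι] {d n : ℕ} (K : ι → Matrix (Fin d) (Fin d) ℂ)
    (ρ σ : Matrix (Fin n → Fin d) (Fin n → Fin d) ℂ) :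
    prodChannel K n (ρ + σ) = prodChannel K n ρ + prodChannel K n σ := by
  simp [prodChannel, mul_add, add_mul, Finset.sum_add_distrib]

lemma prodChannel_smul {ι : Type*} [Fintype ι] {d n : ℕ} (K : ι → Matrix (Fin d) (Fin d) ℂ)
    (c : ℂ) (ρ : Matrix (Fin n → Fin d) (Fin n → Fin d) ℂ) :
    prodChannel K n (c • ρ) = c • prodChannel K n ρ := by
  simp [prodChannel, Matrix.mul_smul, Matrix.smul_mul, Finset.smul_sum]

variable {n : ℕ}

lemma prod_Qm_diag (p : Fin 4 → ℝ) (hp : ∀ i, 0 ≤ p i) (a : Fin 2) (s t : Fin n → Fin 2)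
    (hst : s ≠ t) : ∏ i, Qm p a a (s i) (t i) = 0 := by
  obtain ⟨i, hi⟩ : ∃ i, s i ≠ t i := by
    by_contra h; push_neg at h; exact hst (funext h)
  apply Finset.prod_eq_zero (Finset.mem_univ i)
  fin_cases a
  · show Qm p 0 0 (s i) (t i) = 0
    rw [Qm00 hp]
    rcases fin2_eq (s i) with h1 | h1 <;> rcases fin2_eq (t i) with h2 | h2 <;>
      first | (exact absurd (h1.trans h2.symm) hi) | simp [h1, h2]
  · show Qm p 1 1 (s i) (t i) = 0
    rw [Qm11 hp]
    rcases fin2_eq (s i) with h1 | h1 <;> rcases fin2_eq (t i) with h2 | h2 <;>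
      first | (exact absurd (h1.trans h2.symm) hi) | simp [h1, h2]

lemma prod_Qm00_diag (p : Fin 4 → ℝ) (hp : ∀ i, 0 ≤ p i) (s : Fin n → Fin 2) :
    ∏ i, Qm p 0 0 (s i) (s i)
      = (((p 0 + p 3 : ℝ) : ℂ)) ^ (n - wt s) * (((p 1 + p 2 : ℝ) : ℂ)) ^ (wt s) := by
  have := prod_fin2 s (fun a => Qm p 0 0 a a)
  rw [this, Qm00 hp]
  norm_num

lemma prod_Qm11_diag (p : Fin 4 → ℝ) (hp : ∀ i, 0 ≤ p i) (s : Fin n → Fin 2) :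
    ∏ i, Qm p 1 1 (s i) (s i)
      = (((p 1 + p 2 : ℝ) : ℂ)) ^ (n - wt s) * (((p 0 + p 3 : ℝ) : ℂ)) ^ (wt s) := by
  have := prod_fin2 s (fun a => Qm p 1 1 a a)
  rw [this, Qm11 hp]
  norm_num

lemma channel_repCode (p : Fin 4 → ℝ) (hp : ∀ i, 0 ≤ p i) (hn : 1 ≤ n) (x : ℝ) :
    prodChannel (pauliKraus p) n (repCode n x) = Matrix.diagonal (fun s =>
      ((x * (p 0 + p 3) ^ (n - wt s) * (p 1 + p 2) ^ (wt s)
        + (1 - x) * (p 0 + p 3) ^ (wt s) * (p 1 + p 2) ^ (n - wt s) : ℝ) : ℂ)) := by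
  rw [repCode_eq n hn x, prodChannel_add, prodChannel_smul, prodChannel_smul]
  ext s t
  rw [Matrix.add_apply, Matrix.smul_apply, Matrix.smul_apply]
  rw [show prodChannel (pauliKraus p) n
      (Matrix.single (fun _ => (0:Fin 2)) (fun _ => (0:Fin 2)) 1) s t
      = ∏ i, Qm p 0 0 (s i) (t i) from prodChannel_qm p 0 0 s t]
  rw [show prodChannel (pauliKraus p) n
      (Matrix.single (fun _ => (1:Fin 2)) (fun _ => (1:Fin 2)) 1) s t
      = ∏ i, Qm p 1 1 (s i) (t i) from prodChannel_qm p 1 1 s t]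
  by_cases hst : s = t
  · subst hst
    rw [Matrix.diagonal_apply_eq, prod_Qm00_diag p hp s, prod_Qm11_diag p hp s]
    simp only [smul_eq_mul]
    push_cast
    ring
  · rw [Matrix.diagonal_apply_ne _ hst, prod_Qm_diag p hp 0 s t hst,
      prod_Qm_diag p hp 1 s t hst]
    simp

def cmpl {n : ℕ} (s : Fin n → Fin 2) : Fin n → Fin 2 := fun i => 1 - s i

lemma cmpl_apply {n : ℕ} (s : Fin n → Fin 2) (i : Fin n) : cmpl s i = 1 - s i := rfl

lemma cmpl_cmpl {n : ℕ} (s : Fin n → Fin 2) : cmpl (cmpl s) = s := by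
  funext i; rcases fin2_eq (s i) with h | h <;> simp [cmpl, h]

lemma cmpl_eq_iff {n : ℕ} (s t : Fin n → Fin 2) : cmpl s = t ↔ s = cmpl t := by
  constructor
  · rintro rfl; rw [cmpl_cmpl]
  · rintro rfl; rw [cmpl_cmpl]

lemma wt_cmpl {n : ℕ} (s : Fin n → Fin 2) : wt (cmpl s) = n - wt s := by
  have h : ∀ i, (cmpl s i = 1) ↔ ¬ (s i = 1) := by
    intro i; rcases fin2_eq (s i) with h2 | h2 <;> simp [cmpl, h2]
  have h2 : (Finset.univ.filter fun i => cmpl s i = 1)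
      = (Finset.univ.filter fun i => ¬ s i = 1) :=
    Finset.filter_congr (fun i _ => h i)
  have h3 := Finset.card_filter_add_card_filter_not
    (s := (Finset.univ : Finset (Fin n))) (p := fun i => s i = 1)
  simp only [Finset.card_univ, Fintype.card_fin] at h3
  unfold wt
  rw [h2]
  omega

lemma prod_Qm01 (p : Fin 4 → ℝ) (hp : ∀ i, 0 ≤ p i) (s t : Fin n → Fin 2) :
    ∏ i, Qm p 0 1 (s i) (t i) = if t = cmpl s then
      (((p 0 - p 3 : ℝ) : ℂ)) ^ (n - wt s) * (((p 1 - p 2 : ℝ) : ℂ)) ^ (wt s) else 0 := by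
  split_ifs with h
  · subst h
    have := prod_fin2 s (fun a => Qm p 0 1 a (1 - a))
    simp only [cmpl_apply]
    rw [this, Qm01 hp]
    norm_num
  · obtain ⟨i, hi⟩ : ∃ i, t i ≠ cmpl s i := by
      by_contra hc; push_neg at hc; exact h (funext hc)
    apply Finset.prod_eq_zero (Finset.mem_univ i)
    rw [Qm01 hp]
    rcases fin2_eq (s i) with h1 | h1 <;> rcases fin2_eq (t i) with h2 | h2 <;>
      first | (exfalso; apply hi; rw [cmpl_apply, h1, h2]; rfl) | simp [h1, h2]

lemma prod_Qm10 (p : Fin 4 → ℝ) (hp : ∀ i, 0 ≤ p i) (s t : Fin n → Fin 2) :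
    ∏ i, Qm p 1 0 (s i) (t i) = if t = cmpl s then
      (((p 1 - p 2 : ℝ) : ℂ)) ^ (n - wt s) * (((p 0 - p 3 : ℝ) : ℂ)) ^ (wt s) else 0 := by
  split_ifs with h
  · subst h
    have := prod_fin2 s (fun a => Qm p 1 0 a (1 - a))
    simp only [cmpl_apply]
    rw [this, Qm10 hp]
    norm_num
  · obtain ⟨i, hi⟩ : ∃ i, t i ≠ cmpl s i := by
      by_contra hc; push_neg at hc; exact h (funext hc)
    apply Finset.prod_eq_zero (Finset.mem_univ i)
    rw [Qm10 hp]
    rcases fin2_eq (s i) with h1 | h1 <;> rcases fin2_eq (t i) with h2 | h2 <;>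
      first | (exfalso; apply hi; rw [cmpl_apply, h1, h2]; rfl) | simp [h1, h2]

/-- the 2×2 blocks of `M` -/
def Bblk (p : Fin 4 → ℝ) (x : ℝ) (n : ℕ) (ℓ : Fin n → Fin 2) : Matrix (Fin 2) (Fin 2) ℂ :=
  !![((x * ((p 0 + p 3) ^ (n - wt ℓ) * (p 1 + p 2) ^ (wt ℓ)) : ℝ) : ℂ),
     ((Real.sqrt (x * (1 - x)) * ((p 0 - p 3) ^ (n - wt ℓ) * (p 1 - p 2) ^ (wt ℓ)) : ℝ) : ℂ);
     ((Real.sqrt (x * (1 - x)) * ((p 0 - p 3) ^ (n - wt ℓ) * (p 1 - p 2) ^ (wt ℓ)) : ℝ) : ℂ),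
     (((1 - x) * ((p 0 + p 3) ^ (n - wt ℓ) * (p 1 + p 2) ^ (wt ℓ)) : ℝ) : ℂ)]

/-- the pairing equivalence -/
def eqv (n : ℕ) : (Fin 2 × (Fin n → Fin 2)) ≃ (Fin 2 × (Fin n → Fin 2)) where
  toFun a := (a.1, if a.1 = 0 then a.2 else cmpl a.2)
  invFun a := (a.1, if a.1 = 0 then a.2 else cmpl a.2)
  left_inv a := by
    rcases a with ⟨i, s⟩
    by_cases h : i = 0 <;> simp [h, cmpl_cmpl]
  right_inv a := by
    rcases a with ⟨i, s⟩
    by_cases h : i = 0 <;> simp [h, cmpl_cmpl]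

lemma eqv_apply {n : ℕ} (a : Fin 2 × (Fin n → Fin 2)) :
    eqv n a = (a.1, if a.1 = 0 then a.2 else cmpl a.2) := rfl

lemma cmpl_inj {n : ℕ} {s t : Fin n → Fin 2} (h : cmpl s = cmpl t) : s = t := by
  have := congrArg cmpl h
  rwa [cmpl_cmpl, cmpl_cmpl] at this

lemma M_eq (p : Fin 4 → ℝ) (hp : ∀ i, 0 ≤ p i) (x : ℝ) (hx : x ∈ Set.Icc (0:ℝ) 1) :
    (Matrix.of fun a b : Fin 2 × (Fin n → Fin 2) =>
      (Real.sqrt (![x, 1 - x] a.1 * ![x, 1 - x] b.1) : ℂ) *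
        prodChannel (pauliKraus p) n
          (Matrix.single (fun _ => a.1) (fun _ => b.1) 1) a.2 b.2)
      = (Matrix.blockDiagonal (Bblk p x n)).submatrix (eqv n) (eqv n) := by
  obtain ⟨hx0, hx1⟩ := hx
  have hsx : Real.sqrt (x * x) = x := Real.sqrt_mul_self hx0
  have hsx1 : Real.sqrt ((1 - x) * (1 - x)) = 1 - x := Real.sqrt_mul_self (by linarith)
  ext ⟨i, s⟩ ⟨j, t⟩
  simp only [Matrix.of_apply, Matrix.submatrix_apply]
  rw [prodChannel_qm]
  fin_cases i <;> fin_cases j <;>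
    simp only [eqv_apply, Matrix.blockDiagonal_apply] <;> norm_num
  · -- 0 0
    rw [hsx]
    by_cases hst : s = t
    · subst hst
      rw [if_pos rfl, prod_Qm00_diag p hp]
      simp only [Bblk, Matrix.cons_val', Matrix.cons_val_zero, Matrix.empty_val',
        Matrix.cons_val_fin_one, Matrix.of_apply]
      push_cast
      ring
    · rw [if_neg hst, prod_Qm_diag p hp 0 s t hst, mul_zero]
  · -- 0 1
    rw [prod_Qm01 p hp s t]
    by_cases h : t = cmpl s
    · rw [if_pos h, if_pos (by rw [h, cmpl_cmpl])]
      simp only [Bblk, Matrix.cons_val', Matrix.cons_val_zero, Matrix.cons_val_one,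
        Matrix.head_cons, Matrix.empty_val', Matrix.cons_val_fin_one, Matrix.of_apply,
        Matrix.head_fin_const]
      push_cast
      ring
    · rw [if_neg h, if_neg (fun hc : s = cmpl t => h (by rw [hc, cmpl_cmpl])), mul_zero]
  · -- 1 0
    rw [prod_Qm10 p hp s t]
    by_cases h : t = cmpl s
    · rw [if_pos h, if_pos (by rw [h])]
      simp only [Bblk, Matrix.cons_val', Matrix.cons_val_zero, Matrix.cons_val_one,
        Matrix.head_cons, Matrix.empty_val', Matrix.cons_val_fin_one, Matrix.of_apply,
        Matrix.head_fin_const]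
      rw [mul_comm (1 - x) x, wt_cmpl, Nat.sub_sub_self (wt_le s)]
      push_cast
      ring
    · rw [if_neg h, if_neg (fun hc : cmpl s = t => h hc.symm), mul_zero]
  · -- 1 1
    rw [hsx1]
    by_cases hst : s = t
    · subst hst
      rw [if_pos rfl, prod_Qm11_diag p hp]
      simp only [Bblk, Matrix.cons_val', Matrix.cons_val_zero, Matrix.cons_val_one,
        Matrix.head_cons, Matrix.empty_val', Matrix.cons_val_fin_one, Matrix.of_apply,
        Matrix.head_fin_const]
      rw [wt_cmpl, Nat.sub_sub_self (wt_le s)]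
      push_cast
      ring
    · rw [if_neg (fun hc => hst (cmpl_inj hc)), prod_Qm_diag p hp 1 s t hst, mul_zero]

open Polynomial in
lemma charmatrix_blockDiagonal {o m : Type*} [Fintype o] [DecidableEq o] [Fintype m]
    [DecidableEq m] (B : o → Matrix m m ℂ) :
    charmatrix (Matrix.blockDiagonal B) = Matrix.blockDiagonal (fun ℓ => charmatrix (B ℓ)) := by
  refine Matrix.ext fun a b => ?_
  obtain ⟨i, s⟩ := a
  obtain ⟨j, t⟩ := b
  by_cases hst : s = t
  · subst hst
    by_cases hij : i = j
    · subst hij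
      simp [Matrix.blockDiagonal_apply]
    · have hne : ((i, s) : m × o) ≠ (j, s) := by simp [hij]
      rw [charmatrix_apply_ne _ _ _ hne]
      simp [Matrix.blockDiagonal_apply, charmatrix_apply_ne _ _ _ hij]
  · have hne : ((i, s) : m × o) ≠ (j, t) := by simp [hst]
    rw [charmatrix_apply_ne _ _ _ hne]
    simp [Matrix.blockDiagonal_apply, hst]

lemma charpoly_blockDiagonal {o m : Type*} [Fintype o] [DecidableEq o] [Fintype m]
    [DecidableEq m] (B : o → Matrix m m ℂ) :
    (Matrix.blockDiagonal B).charpoly = ∏ ℓ, (B ℓ).charpoly := by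
  rw [Matrix.charpoly, charmatrix_blockDiagonal, Matrix.det_blockDiagonal]
  rfl

open Polynomial in
lemma charpoly_fin2 (A : Matrix (Fin 2) (Fin 2) ℂ) :
    A.charpoly = X ^ 2 - C (A 0 0 + A 1 1) * X + C (A 0 0 * A 1 1 - A 0 1 * A 1 0) := by
  rw [Matrix.charpoly, Matrix.det_fin_two, charmatrix_apply_eq, charmatrix_apply_eq,
    charmatrix_apply_ne _ _ _ (by decide : (0 : Fin 2) ≠ 1),
    charmatrix_apply_ne _ _ _ (by decide : (1 : Fin 2) ≠ 0)]
  simp only [map_add, map_sub, _root_.map_mul]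
  ring

lemma card_wt {n : ℕ} (w : ℕ) :
    (Finset.univ.filter fun s : Fin n → Fin 2 => wt s = w).card = n.choose w := by
  have := Finset.card_bij' (s := Finset.univ.filter fun s : Fin n → Fin 2 => wt s = w)
    (t := Finset.powersetCard w (Finset.univ : Finset (Fin n)))
    (i := fun s _ => Finset.univ.filter fun k => s k = 1)
    (j := fun T _ => fun k => if k ∈ T then 1 else 0)
    (hi := ?_) (hj := ?_) (left_inv := ?_) (right_inv := ?_)
  · rw [this, Finset.card_powersetCard, Finset.card_univ, Fintype.card_fin]
  · intro s hs
    rw [Finset.mem_powersetCard]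
    exact ⟨Finset.filter_subset _ _ |>.trans (by simp), (Finset.mem_filter.mp hs).2⟩
  · intro T hT
    rw [Finset.mem_filter]
    refine ⟨Finset.mem_univ _, ?_⟩
    rw [Finset.mem_powersetCard] at hT
    have hfT : (Finset.univ.filter fun k => (if k ∈ T then (1 : Fin 2) else 0) = 1) = T := by
      ext k
      simp only [Finset.mem_filter, Finset.mem_univ, true_and]
      split_ifs with h <;> simp [h]
    unfold wt
    rw [hfT, hT.2]
  · intro s _
    funext k
    by_cases h : s k = 1
    · simp [h]
    · simp only [Finset.mem_filter, Finset.mem_univ, true_and]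
      rw [if_neg h]
      rcases fin2_eq (s k) with h2 | h2
      · exact h2.symm
      · exact absurd h2 h
  · intro T _
    ext k
    simp only [Finset.mem_filter, Finset.mem_univ, true_and]
    split_ifs with h <;> simp [h]

lemma sum_wt {n : ℕ} (f : ℕ → ℝ) :
    ∑ s : Fin n → Fin 2, f (wt s) = ∑ w ∈ Finset.range (n + 1), (n.choose w : ℝ) * f w := by
  rw [← Finset.sum_fiberwise_of_maps_to (g := wt) (t := Finset.range (n + 1))
    (fun s _ => Finset.mem_range.mpr (Nat.lt_succ_of_le (wt_le s)))]
  refine Finset.sum_congr rfl fun w _ => ?_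
  rw [Finset.sum_congr rfl (fun s hs => by rw [(Finset.mem_filter.mp hs).2]),
    Finset.sum_const, card_wt, nsmul_eq_mul]


/-- Base-2 von Neumann entropy of a (Hermitian) matrix; junk value `0` otherwise. -/
def vnEntropy {m : Type*} [Fintype m] [DecidableEq m] (ρ : Matrix m m ℂ) : ℝ := by
  classical exact
    if h : ρ.IsHermitian then (1 / Real.log 2) * ∑ i, Real.negMulLog (h.eigenvalues i) else 0


lemma vnEntropy_of {m : Type*} [Fintype m] [DecidableEq m] (ρ : Matrix m m ℂ)
    (h : ρ.IsHermitian) :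
    vnEntropy ρ = (1 / Real.log 2) * ∑ i, Real.negMulLog (h.eigenvalues i) := by
  unfold vnEntropy
  rw [dif_pos h]

/-- Coherent information of the weighted repetition code through `n` copies of a Pauli
channel: the outputs are Hermitian, and the entropy difference is given by the explicit
binomial formula in `y₁, y₊, y₋`. -/
theorem stmt11 (p : Fin 4 → ℝ) (hp : ∀ i, 0 ≤ p i) (hp1 : ∑ i, p i = 1)
    (x : ℝ) (hx : x ∈ Set.Icc (0 : ℝ) 1) (n : ℕ) (hn : 1 ≤ n)
    (M : Matrix (Fin 2 × (Fin n → Fin 2)) (Fin 2 × (Fin n → Fin 2)) ℂ)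
    (hM : M = Matrix.of fun a b =>
      (Real.sqrt (![x, 1 - x] a.1 * ![x, 1 - x] b.1) : ℂ) *
        prodChannel (pauliKraus p) n
          (Matrix.single (fun _ => a.1) (fun _ => b.1) 1) a.2 b.2)
    (y1 Δ yp ym : ℕ → ℝ)
    (hy1 : ∀ w, y1 w = x * (p 0 + p 3) ^ (n - w) * (p 1 + p 2) ^ w
      + (1 - x) * (p 0 + p 3) ^ w * (p 1 + p 2) ^ (n - w))
    (hΔ : ∀ w, Δ w = ((2 * x - 1) * (p 0 + p 3) ^ (n - w) * (p 1 + p 2) ^ w) ^ 2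
      + 4 * x * (1 - x) * ((p 0 - p 3) ^ (n - w) * (p 1 - p 2) ^ w) ^ 2)
    (hyp : ∀ w, yp w = ((p 0 + p 3) ^ (n - w) * (p 1 + p 2) ^ w + Real.sqrt (Δ w)) / 2)
    (hym : ∀ w, ym w = ((p 0 + p 3) ^ (n - w) * (p 1 + p 2) ^ w - Real.sqrt (Δ w)) / 2) :
    (prodChannel (pauliKraus p) n (repCode n x)).IsHermitian ∧ M.IsHermitian ∧
    vnEntropy (prodChannel (pauliKraus p) n (repCode n x)) - vnEntropy M =
      (1 / Real.log 2) * ∑ w ∈ Finset.range (n + 1), (n.choose w : ℝ) *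
        (Real.negMulLog (y1 w) - Real.negMulLog (yp w) - Real.negMulLog (ym w)) := by
  obtain ⟨hx0, hx1⟩ := hx
  have hch := channel_repCode p hp hn x
  have hd : (fun s : Fin n → Fin 2 =>
      ((x * (p 0 + p 3) ^ (n - wt s) * (p 1 + p 2) ^ (wt s)
        + (1 - x) * (p 0 + p 3) ^ (wt s) * (p 1 + p 2) ^ (n - wt s) : ℝ) : ℂ))
      = fun s => ((y1 (wt s) : ℝ) : ℂ) := funext fun s => by rw [hy1]
  rw [hd] at hch
  have hherm1 : (prodChannel (pauliKraus p) n (repCode n x)).IsHermitian := by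
    rw [hch]
    exact Matrix.isHermitian_diagonal_of_self_adjoint _
      (funext fun s => Complex.conj_ofReal _)
  have hMeq : M = (Matrix.blockDiagonal (Bblk p x n)).submatrix (eqv n) (eqv n) := by
    rw [hM]; exact M_eq p hp x ⟨hx0, hx1⟩
  have hBherm : (fun ℓ : Fin n → Fin 2 => (Bblk p x n ℓ)ᴴ) = Bblk p x n := by
    funext ℓ
    ext i j
    fin_cases i <;> fin_cases j <;>
      simp [Bblk, Matrix.conjTranspose_apply, Complex.conj_ofReal]
  have hherm2 : M.IsHermitian := by
    rw [hMeq, Matrix.IsHermitian, Matrix.conjTranspose_submatrix,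
      Matrix.blockDiagonal_conjTranspose, hBherm]
  refine ⟨hherm1, hherm2, ?_⟩
  have hΔnn : ∀ w, 0 ≤ Δ w := fun w => by
    rw [hΔ]
    have h1 : 0 ≤ 4 * x * (1 - x) := by nlinarith
    have h2 := sq_nonneg ((2 * x - 1) * (p 0 + p 3) ^ (n - w) * (p 1 + p 2) ^ w)
    have h3 := sq_nonneg ((p 0 - p 3) ^ (n - w) * (p 1 - p 2) ^ w)
    nlinarith [mul_nonneg h1 h3]
  have hsum : ∀ w, yp w + ym w = (p 0 + p 3) ^ (n - w) * (p 1 + p 2) ^ w := fun w => by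
    rw [hyp, hym]; ring
  have hprod : ∀ w, yp w * ym w
      = x * (1 - x) * (((p 0 + p 3) ^ (n - w) * (p 1 + p 2) ^ w) ^ 2
        - ((p 0 - p 3) ^ (n - w) * (p 1 - p 2) ^ w) ^ 2) := by
    intro w
    have hs : Real.sqrt (Δ w) * Real.sqrt (Δ w) = Δ w := Real.mul_self_sqrt (hΔnn w)
    rw [hyp, hym]
    have hcalc : ((p 0 + p 3) ^ (n - w) * (p 1 + p 2) ^ w + Real.sqrt (Δ w)) / 2 *
        (((p 0 + p 3) ^ (n - w) * (p 1 + p 2) ^ w - Real.sqrt (Δ w)) / 2)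
        = (((p 0 + p 3) ^ (n - w) * (p 1 + p 2) ^ w) ^ 2
          - Real.sqrt (Δ w) * Real.sqrt (Δ w)) / 4 := by ring
    rw [hcalc, hs, hΔ]
    ring
  have hg2 : Real.sqrt (x * (1 - x)) * Real.sqrt (x * (1 - x)) = x * (1 - x) :=
    Real.mul_self_sqrt (mul_nonneg hx0 (by linarith))
  have hcpB : ∀ ℓ : Fin n → Fin 2, (Bblk p x n ℓ).charpoly
      = (Polynomial.X - Polynomial.C ((yp (wt ℓ) : ℝ) : ℂ)) *
        (Polynomial.X - Polynomial.C ((ym (wt ℓ) : ℝ) : ℂ)) := by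
    intro ℓ
    have e00 : Bblk p x n ℓ 0 0
        = ((x * ((p 0 + p 3) ^ (n - wt ℓ) * (p 1 + p 2) ^ (wt ℓ)) : ℝ) : ℂ) := by
      simp [Bblk]
    have e01 : Bblk p x n ℓ 0 1
        = ((Real.sqrt (x * (1 - x)) *
            ((p 0 - p 3) ^ (n - wt ℓ) * (p 1 - p 2) ^ (wt ℓ)) : ℝ) : ℂ) := by
      simp [Bblk]
    have e10 : Bblk p x n ℓ 1 0
        = ((Real.sqrt (x * (1 - x)) *
            ((p 0 - p 3) ^ (n - wt ℓ) * (p 1 - p 2) ^ (wt ℓ)) : ℝ) : ℂ) := by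
      simp [Bblk]
    have e11 : Bblk p x n ℓ 1 1
        = (((1 - x) * ((p 0 + p 3) ^ (n - wt ℓ) * (p 1 + p 2) ^ (wt ℓ)) : ℝ) : ℂ) := by
      simp [Bblk]
    have hrtr : x * ((p 0 + p 3) ^ (n - wt ℓ) * (p 1 + p 2) ^ (wt ℓ))
        + (1 - x) * ((p 0 + p 3) ^ (n - wt ℓ) * (p 1 + p 2) ^ (wt ℓ))
        = yp (wt ℓ) + ym (wt ℓ) := by
      rw [hsum (wt ℓ)]; ring
    have hr : x * ((p 0 + p 3) ^ (n - wt ℓ) * (p 1 + p 2) ^ (wt ℓ)) *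
        ((1 - x) * ((p 0 + p 3) ^ (n - wt ℓ) * (p 1 + p 2) ^ (wt ℓ)))
        - Real.sqrt (x * (1 - x)) *
            ((p 0 - p 3) ^ (n - wt ℓ) * (p 1 - p 2) ^ (wt ℓ)) *
          (Real.sqrt (x * (1 - x)) *
            ((p 0 - p 3) ^ (n - wt ℓ) * (p 1 - p 2) ^ (wt ℓ)))
        = yp (wt ℓ) * ym (wt ℓ) := by
      rw [show x * ((p 0 + p 3) ^ (n - wt ℓ) * (p 1 + p 2) ^ (wt ℓ)) *
          ((1 - x) * ((p 0 + p 3) ^ (n - wt ℓ) * (p 1 + p 2) ^ (wt ℓ)))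
          - Real.sqrt (x * (1 - x)) *
              ((p 0 - p 3) ^ (n - wt ℓ) * (p 1 - p 2) ^ (wt ℓ)) *
            (Real.sqrt (x * (1 - x)) *
              ((p 0 - p 3) ^ (n - wt ℓ) * (p 1 - p 2) ^ (wt ℓ)))
          = x * (1 - x) * ((p 0 + p 3) ^ (n - wt ℓ) * (p 1 + p 2) ^ (wt ℓ)) ^ 2
            - Real.sqrt (x * (1 - x)) * Real.sqrt (x * (1 - x)) *
              ((p 0 - p 3) ^ (n - wt ℓ) * (p 1 - p 2) ^ (wt ℓ)) ^ 2 from by ring,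
        hg2, hprod (wt ℓ)]
      ring
    rw [charpoly_fin2, e00, e01, e10, e11, ← Complex.ofReal_add, hrtr,
      ← Complex.ofReal_mul, ← Complex.ofReal_mul, ← Complex.ofReal_sub, hr]
    push_cast
    simp only [map_add, _root_.map_mul]
    ring
  have hcpM : M.charpoly = ∏ ℓ : Fin n → Fin 2, (Bblk p x n ℓ).charpoly := by
    rw [hMeq]
    have hre : (Matrix.blockDiagonal (Bblk p x n)).submatrix (eqv n) (eqv n)
        = Matrix.reindex (eqv n).symm (eqv n).symm (Matrix.blockDiagonal (Bblk p x n)) := rfl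
    rw [hre, Matrix.charpoly_reindex, charpoly_blockDiagonal]
  set μM : Multiset ℝ := Finset.univ.val.bind
    (fun ℓ : Fin n → Fin 2 => {yp (wt ℓ), ym (wt ℓ)}) with hμM
  have hrootsM : M.charpoly.roots = Multiset.map Complex.ofReal μM := by
    rw [hcpM]
    simp only [hcpB]
    have hprodform : (∏ ℓ : Fin n → Fin 2,
        ((Polynomial.X - Polynomial.C ((yp (wt ℓ) : ℝ) : ℂ)) *
         (Polynomial.X - Polynomial.C ((ym (wt ℓ) : ℝ) : ℂ))))
        = ((μM.map Complex.ofReal).map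
            (fun a => Polynomial.X - Polynomial.C a)).prod := by
      rw [hμM, Multiset.map_bind, Multiset.map_bind, Multiset.prod_bind,
        Finset.prod_eq_multiset_prod]
      congr 1
      apply Multiset.map_congr rfl
      intro ℓ _
      simp
    rw [hprodform, Polynomial.roots_multiset_prod_X_sub_C]
  have hsumM := sum_eig_eq hherm2 μM hrootsM
  set μ1 : Multiset ℝ := Finset.univ.val.map
    (fun s : Fin n → Fin 2 => y1 (wt s)) with hμ1
  have hroots1 : (prodChannel (pauliKraus p) n (repCode n x)).charpoly.roots
      = Multiset.map Complex.ofReal μ1 := by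
    rw [hch, roots_charpoly_diagonal, hμ1, Multiset.map_map]
    rfl
  have hsum1 := sum_eig_eq hherm1 μ1 hroots1
  rw [vnEntropy_of _ hherm1, vnEntropy_of _ hherm2, hsum1, hsumM]
  have e1 : (μ1.map Real.negMulLog).sum
      = ∑ s : Fin n → Fin 2, Real.negMulLog (y1 (wt s)) := by
    rw [hμ1, Multiset.map_map, Finset.sum_eq_multiset_sum]
    rfl
  have e2 : (μM.map Real.negMulLog).sum
      = ∑ ℓ : Fin n → Fin 2,
          (Real.negMulLog (yp (wt ℓ)) + Real.negMulLog (ym (wt ℓ))) := by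
    rw [hμM, Multiset.map_bind, Multiset.sum_bind, Finset.sum_eq_multiset_sum]
    congr 1
    apply Multiset.map_congr rfl
    intro ℓ _
    simp
  rw [e1, e2, sum_wt (fun w => Real.negMulLog (y1 w)),
    sum_wt (fun w => Real.negMulLog (yp w) + Real.negMulLog (ym w))]
  rw [← mul_sub, ← Finset.sum_sub_distrib]
  congr 1
  refine Finset.sum_congr rfl fun w _ => ?_
  ring

end
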